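/- Let G be an affine flat group scheme over a Dedekind domain k. Then every O(G)-comodule (algebraic representation of G) whose underlying k-module is torsion-free is the filtered union of its subcomodules whose underlying k-modules are finitely generated and projective. -/

import Mathlib

open TensorProduct

/-- A comodule over the coalgebra `A = O(G)` of an affine (flat) group scheme `G` over `k`:
a `k`-module `V` together with a coassociative, counital coaction `V → V ⊗ A`. -/
structure GComodule (k : Type*) [CommRing k] (A : Type*) [AddCommGroup A] [Module k A]
    [Coalgebra k A] (V : Type*) [AddCommGroup V] [Module k V] where
  coaction : V →ₗ[k] V ⊗[k] A
  counit_coaction :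
    (TensorProduct.map (LinearMap.id (M := V)) (Coalgebra.counit (R := k) (A := A))) ∘ₗ coaction
      = (TensorProduct.rid k V).symm.toLinearMap
  coassoc :
    (TensorProduct.map coaction (LinearMap.id (M := A))) ∘ₗ coaction
      = (TensorProduct.assoc k V A A).symm.toLinearMap
          ∘ₗ (TensorProduct.map (LinearMap.id (M := V)) (Coalgebra.comul (R := k) (A := A)))
          ∘ₗ coaction

/-- A submodule `W ⊆ V` is a subcomodule if the coaction sends `W` into the image of
`W ⊗ A → V ⊗ A`. -/
def GComodule.IsSubcomodule {k : Type*} [CommRing k] {A : Type*} [AddCommGroup A] [Module k A]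
    [Coalgebra k A] {V : Type*} [AddCommGroup V] [Module k V] (ρ : GComodule k A V)
    (W : Submodule k V) : Prop :=
  ∀ w ∈ W, ρ.coaction w ∈ LinearMap.range (W.subtype.rTensor A)

/-! A finitely generated torsion-free module over a Dedekind domain is flat and finitely presented,
hence projective, so it suffices to show that every `v ∈ V` lies in a finitely generated
subcomodule. Choose a finitely generated `W₀ ⊆ V` with `ρ v ∈ W₀ ⊗ A` and take the kernel of
`V → (V ⧸ W₀) ⊗ A`: the counit puts it inside `W₀`, and coassociativity together with the
flatness of `A` makes it a subcomodule. -/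

theorem Module.projective_of_finite_of_isTorsionFree (R : Type*) [CommRing R] [IsDedekindDomain R]
    (M : Type*) [AddCommGroup M] [Module R M] [Module.IsTorsionFree R M] [Module.Finite R M] :
    Module.Projective R M :=
  have := Module.finitePresentation_of_finite R M
  Module.Flat.projective_of_finitePresentation

namespace GComodule

variable {k : Type*} [CommRing k] {A : Type*} [AddCommGroup A] [Module k A] [Coalgebra k A]
  {V : Type*} [AddCommGroup V] [Module k V] (ρ : GComodule k A V)

theorem rid_map_counit_coaction {U : Type*} [AddCommGroup U] [Module k U] (g : V →ₗ[k] U)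
    (v : V) :
    TensorProduct.rid k U (TensorProduct.map g Coalgebra.counit (ρ.coaction v)) = g v := by
  have hcounit := LinearMap.congr_fun ρ.counit_coaction v
  simp only [LinearMap.comp_apply, LinearEquiv.coe_coe] at hcounit
  rw [← LinearMap.comp_id g, ← LinearMap.id_comp Coalgebra.counit, TensorProduct.map_comp,
    LinearMap.comp_apply, hcounit]
  simp

variable {ρ} in
theorem IsSubcomodule.sup {W₁ W₂ : Submodule k V} (h₁ : ρ.IsSubcomodule W₁)
    (h₂ : ρ.IsSubcomodule W₂) : ρ.IsSubcomodule (W₁ ⊔ W₂) := by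
  have range_mono : ∀ {W : Submodule k V} (hW : W ≤ W₁ ⊔ W₂),
      LinearMap.range (W.subtype.rTensor A) ≤ LinearMap.range ((W₁ ⊔ W₂).subtype.rTensor A) := by
    intro W hW
    rw [← Submodule.subtype_comp_inclusion W (W₁ ⊔ W₂) hW, LinearMap.rTensor_comp]
    exact LinearMap.range_comp_le_range _ _
  intro w hw
  obtain ⟨w₁, hw₁, w₂, hw₂, rfl⟩ := Submodule.mem_sup.mp hw
  rw [map_add]
  exact add_mem (range_mono le_sup_left (h₁ w₁ hw₁)) (range_mono le_sup_right (h₂ w₂ hw₂))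

/-- For flat `A` this is the largest subcomodule contained in `W₀`. -/
def core (W₀ : Submodule k V) : Submodule k V :=
  LinearMap.ker (W₀.mkQ.rTensor A ∘ₗ ρ.coaction)

theorem core_le (W₀ : Submodule k V) : ρ.core W₀ ≤ W₀ := by
  intro w hw
  have hw : W₀.mkQ.rTensor A (ρ.coaction w) = 0 := hw
  have hcounit := ρ.rid_map_counit_coaction W₀.mkQ w
  rw [← LinearMap.lTensor_comp_rTensor, LinearMap.comp_apply, hw, map_zero, map_zero] at hcounit
  exact (Submodule.Quotient.mk_eq_zero W₀).mp hcounit.symm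

theorem mem_core_of_coaction_mem {W₀ : Submodule k V} {v : V}
    (hv : ρ.coaction v ∈ LinearMap.range (W₀.subtype.rTensor A)) : v ∈ ρ.core W₀ := by
  obtain ⟨y, hy⟩ := hv
  change W₀.mkQ.rTensor A (ρ.coaction v) = 0
  rw [← hy, ← LinearMap.comp_apply, ← LinearMap.rTensor_comp,
    (LinearMap.exact_subtype_mkQ W₀).linearMap_comp_eq_zero, LinearMap.rTensor_zero,
    LinearMap.zero_apply]

theorem isSubcomodule_core [Module.Flat k A] (W₀ : Submodule k V) :
    ρ.IsSubcomodule (ρ.core W₀) := by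
  intro w hw
  have hw : W₀.mkQ.rTensor A (ρ.coaction w) = 0 := hw
  -- flatness of `A`: the image of `core W₀ ⊗ A` is the kernel of the defining map tensored with `A`
  rw [core, ← (Module.Flat.rTensor_exact A (LinearMap.exact_subtype_ker_map _)).linearMap_ker_eq,
    LinearMap.mem_ker]
  have hcoassoc := LinearMap.congr_fun ρ.coassoc w
  simp only [LinearMap.comp_apply, LinearEquiv.coe_coe] at hcoassoc
  calc (W₀.mkQ.rTensor A ∘ₗ ρ.coaction).rTensor A (ρ.coaction w)
      = TensorProduct.map (W₀.mkQ.rTensor A) LinearMap.id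
          (TensorProduct.map ρ.coaction LinearMap.id (ρ.coaction w)) := by
        rw [LinearMap.rTensor_comp]; rfl
    _ = (TensorProduct.assoc k _ A A).symm
          (TensorProduct.map LinearMap.id Coalgebra.comul (W₀.mkQ.rTensor A (ρ.coaction w))) := by
        rw [hcoassoc, LinearMap.rTensor, TensorProduct.map_map_assoc_symm,
          TensorProduct.map_map, TensorProduct.map_map, TensorProduct.map_id]
        rfl
    _ = 0 := by rw [hw, map_zero, map_zero]

theorem fg_core [IsNoetherianRing k] {W₀ : Submodule k V} (hW₀ : W₀.FG) : (ρ.core W₀).FG :=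
  hW₀.of_le (ρ.core_le W₀)

theorem exists_fg_isSubcomodule_mem [IsNoetherianRing k] [Module.Flat k A] (v : V) :
    ∃ W : Submodule k V, ρ.IsSubcomodule W ∧ W.FG ∧ v ∈ W := by
  obtain ⟨W₀, hW₀, hv⟩ := TensorProduct.exists_finite_submodule_left_of_setFinite
    {ρ.coaction v} (Set.finite_singleton _)
  exact ⟨ρ.core W₀, ρ.isSubcomodule_core W₀, ρ.fg_core (Module.Finite.iff_fg.mp hW₀),
    ρ.mem_core_of_coaction_mem (hv rfl)⟩

end GComodule

/-- Over a Dedekind domain `k`, for `G` an affine flat group scheme with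
(commutative Hopf) coordinate algebra `A = O(G)` flat over `k`, every `O(G)`-comodule whose
underlying `k`-module is torsion-free is the filtered union of its subcomodules whose
underlying `k`-modules are finitely generated and projective. -/
theorem comodule_filtered_union_of_fg_projective_subcomodules
    (k : Type*) [CommRing k] [IsDedekindDomain k]
    (A : Type*) [CommRing A] [HopfAlgebra k A] [Module.Flat k A]
    (V : Type*) [AddCommGroup V] [Module k V] [NoZeroSMulDivisors k V]
    (ρ : GComodule k A V) :
    DirectedOn (· ≤ ·)
      {W : Submodule k V | ρ.IsSubcomodule W ∧ W.FG ∧ Module.Projective k W} ∧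
    sSup {W : Submodule k V | ρ.IsSubcomodule W ∧ W.FG ∧ Module.Projective k W} = ⊤ := by
  have projective : ∀ W : Submodule k V, W.FG → Module.Projective k W := fun W hW =>
    have := Module.Finite.iff_fg.mpr hW
    Module.projective_of_finite_of_isTorsionFree k W
  constructor
  · rintro W₁ ⟨h₁, hfg₁, -⟩ W₂ ⟨h₂, hfg₂, -⟩
    exact ⟨W₁ ⊔ W₂, ⟨h₁.sup h₂, hfg₁.sup hfg₂, projective _ (hfg₁.sup hfg₂)⟩,
      le_sup_left, le_sup_right⟩
  · refine eq_top_iff.mpr fun v _ => ?_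
    obtain ⟨W, hW, hfg, hv⟩ := ρ.exists_fg_isSubcomodule_mem v
    refine Submodule.mem_sSup_of_mem ?_ hv
    exact ⟨hW, hfg, projective W hfg⟩
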